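/- Let μ, ν be finitely supported probability measures on ℝ^d and k the RBF kernel with bandwidth σ > 0. Then MMD²(μ,ν) = 0 if and only if μ = ν. -/

import Mathlib

open Finset

/-- Expectation of a kernel under a product of finitely supported measures. -/
noncomputable def kerExp {X : Type*} (k : X → X → ℝ) (μ ν : X →₀ ℝ) : ℝ :=
  ∑ x ∈ μ.support, ∑ y ∈ ν.support, μ x * ν y * k x y

/-- Squared MMD of finitely supported measures. -/
noncomputable def mmdSq {X : Type*} (k : X → X → ℝ) (μ ν : X →₀ ℝ) : ℝ :=
  kerExp k μ μ - 2 * kerExp k μ ν + kerExp k ν ν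

/-- A finitely supported probability measure. -/
def IsFinPmf {X : Type*} (μ : X →₀ ℝ) : Prop :=
  (∀ x, 0 ≤ μ x) ∧ ∑ x ∈ μ.support, μ x = 1

open MeasureTheory Real
open scoped RealInnerProductSpace

section Aux


variable {d : ℕ}

local notation "E" => EuclideanSpace ℝ (Fin d)

lemma aux_integrable_gauss0 {b : ℝ} (hb : 0 < b) :
    Integrable (fun v : E => Real.exp (-b * ‖v‖ ^ 2)) := by
  have h := (GaussianFourier.integrable_cexp_neg_mul_sq_norm_add (V := E)
      (b := (b : ℂ)) (by simpa using hb) 0 0).re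
  refine h.congr (Filter.Eventually.of_forall fun v => ?_)
  have : (-(b:ℂ) * (‖v‖:ℂ) ^ 2 + 0 * ((inner ℝ (0:E) v : ℝ) : ℂ)) = ((-b * ‖v‖ ^ 2 : ℝ) : ℂ) := by
    push_cast; ring
  simp only [neg_mul]
  rw [show (-(↑b * (↑‖v‖:ℂ) ^ 2) + 0 * ((inner ℝ (0:E) v : ℝ) : ℂ)) = ((-(b * ‖v‖ ^ 2) : ℝ) : ℂ) by
    push_cast; ring]
  simp [RCLike.re_to_complex, ← Complex.ofReal_pow, ← Complex.ofReal_mul, ← Complex.ofReal_neg, Complex.exp_ofReal_re]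

lemma aux_integrable_gauss {b : ℝ} (hb : 0 < b) (m : E) :
    Integrable (fun w : E => Real.exp (-b * ‖m - w‖ ^ 2)) := by
  have h2 := (aux_integrable_gauss0 (d := d) hb).comp_sub_right m
  simpa [norm_sub_rev] using h2

lemma aux_gauss_pos {b : ℝ} (hb : 0 < b) :
    0 < ∫ v : E, Real.exp (-b * ‖v‖ ^ 2) := by
  rw [GaussianFourier.integral_rexp_neg_mul_sq_norm hb]
  positivity

lemma aux_parallelogram (x y w : E) :
    ‖x - w‖ ^ 2 + ‖y - w‖ ^ 2 = 2 * ‖(2⁻¹ : ℝ) • (x + y) - w‖ ^ 2 + ‖x - y‖ ^ 2 / 2 := by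
  have hp := parallelogram_law_with_norm ℝ (x - w) (y - w)
  have h2 : (x - w) + (y - w) = (2 : ℝ) • ((2⁻¹ : ℝ) • (x + y) - w) := by
    module
  have h3 : (x - w) - (y - w) = x - y := by abel
  rw [h2, h3, norm_smul] at hp
  simp only [Real.norm_ofNat] at hp
  nlinarith [norm_nonneg ((2⁻¹ : ℝ) • (x + y) - w), norm_nonneg (x - y), norm_nonneg (x - w), norm_nonneg (y - w)]

lemma aux_generic (S : Finset E) :
    ∃ v : E, ∀ x ∈ S, ∀ y ∈ S, x ≠ y → ⟪x, v⟫ ≠ ⟪y, v⟫ := by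
  classical
  have hvol : (volume (⋃ p ∈ (S ×ˢ S).filter (fun p => p.1 ≠ p.2),
      {v : E | ⟪p.1 - p.2, v⟫ = 0})) = 0 := by
    refine le_antisymm (le_trans (measure_biUnion_finset_le _ _) ?_) (by simp)
    refine le_of_eq (Finset.sum_eq_zero fun p hp => ?_)
    simp only [Finset.mem_filter, Finset.mem_product] at hp
    have hne : p.1 - p.2 ≠ 0 := sub_ne_zero.2 hp.2
    have : {v : E | ⟪p.1 - p.2, v⟫ = 0} = ((LinearMap.ker (innerSL ℝ (p.1 - p.2) : E →ₗ[ℝ] ℝ) : Submodule ℝ E) : Set E) := by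
      ext v; simp only [Set.mem_setOf_eq, SetLike.mem_coe, LinearMap.mem_ker, ContinuousLinearMap.coe_coe, innerSL_apply_apply]
    rw [this]
    refine Measure.addHaar_submodule volume _ (fun htop => ?_)
    have : ⟪p.1 - p.2, p.1 - p.2⟫ = 0 := by
      have : p.1 - p.2 ∈ LinearMap.ker (innerSL ℝ (p.1 - p.2) : E →ₗ[ℝ] ℝ) := htop ▸ Submodule.mem_top
      simpa only [LinearMap.mem_ker, ContinuousLinearMap.coe_coe, innerSL_apply_apply] using this
    exact hne ((inner_self_eq_zero (𝕜 := ℝ)).1 this)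
  have hne' : (⋃ p ∈ (S ×ˢ S).filter (fun p => p.1 ≠ p.2),
      {v : E | ⟪p.1 - p.2, v⟫ = 0}) ≠ Set.univ := by
    intro h
    rw [h] at hvol
    exact (isOpen_univ.measure_pos volume ⟨0, trivial⟩).ne' hvol
  obtain ⟨v, hv⟩ := Set.ne_univ_iff_exists_notMem _ |>.1 hne'
  refine ⟨v, fun x hx y hy hxy hinner => hv ?_⟩
  have hp : (x, y) ∈ (S ×ˢ S).filter (fun p => p.1 ≠ p.2) :=
    Finset.mem_filter.2 ⟨Finset.mem_product.2 ⟨hx, hy⟩, hxy⟩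
  exact Set.mem_biUnion hp (by show ⟪x - y, v⟫ = 0; rw [inner_sub_left, hinner, sub_self])

lemma gaussian_pd {σ : ℝ} (hσ : 0 < σ) (S : Finset E) (c : E → ℝ)
    (h : ∑ x ∈ S, ∑ y ∈ S, c x * c y * Real.exp (-‖x - y‖ ^ 2 / (2 * σ ^ 2)) = 0) :
    ∀ x ∈ S, c x = 0 := by
  classical
  set b : ℝ := 1 / σ ^ 2 with hbdef
  have hb : 0 < b := by positivity
  have hσ2 : (σ : ℝ) ^ 2 ≠ 0 := by positivity
  set F : E → ℝ := fun w => ∑ x ∈ S, c x * Real.exp (-b * ‖x - w‖ ^ 2) with hFdef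
  have hFsq : (fun w : E => F w ^ 2) = fun w => ∑ x ∈ S, ∑ y ∈ S,
      (c x * c y * Real.exp (-‖x - y‖ ^ 2 / (2 * σ ^ 2))) *
        Real.exp (-(2 * b) * ‖(2⁻¹ : ℝ) • (x + y) - w‖ ^ 2) := by
    funext w
    rw [sq, hFdef, Finset.sum_mul_sum]
    refine Finset.sum_congr rfl fun x hx => Finset.sum_congr rfl fun y hy => ?_
    have hpar := aux_parallelogram x y w
    have hexp : Real.exp (-b * ‖x - w‖ ^ 2) * Real.exp (-b * ‖y - w‖ ^ 2)
        = Real.exp (-‖x - y‖ ^ 2 / (2 * σ ^ 2)) * Real.exp (-(2 * b) * ‖(2⁻¹ : ℝ) • (x + y) - w‖ ^ 2) := by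
      rw [← Real.exp_add, ← Real.exp_add]
      congr 1
      rw [hbdef]
      linear_combination (-(1 / σ ^ 2)) * hpar
    rw [mul_mul_mul_comm, hexp]
    ring
  have hterm : ∀ (m : E) (a : ℝ),
      Integrable (fun w : E => a * Real.exp (-(2 * b) * ‖m - w‖ ^ 2)) :=
    fun m a => (aux_integrable_gauss (by positivity) m).const_mul a
  have hGint : Integrable (fun w : E => F w ^ 2) := by
    rw [hFsq]
    exact integrable_finset_sum _ fun x _ => integrable_finset_sum _ fun y _ => hterm _ _
  have htrans : ∀ m : E, ∫ w : E, Real.exp (-(2 * b) * ‖m - w‖ ^ 2)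
      = ∫ u : E, Real.exp (-(2 * b) * ‖u‖ ^ 2) := by
    intro m
    simp_rw [norm_sub_rev m]
    exact integral_sub_right_eq_self (fun u : E => Real.exp (-(2 * b) * ‖u‖ ^ 2)) m
  have hzero : ∫ w : E, F w ^ 2 = 0 := by
    rw [hFsq, integral_finset_sum _ (fun x _ => integrable_finset_sum _ fun y _ => hterm _ _)]
    have : ∀ x ∈ S, (∫ w : E, ∑ y ∈ S,
        (c x * c y * Real.exp (-‖x - y‖ ^ 2 / (2 * σ ^ 2))) *
          Real.exp (-(2 * b) * ‖(2⁻¹ : ℝ) • (x + y) - w‖ ^ 2))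
        = ∑ y ∈ S, (c x * c y * Real.exp (-‖x - y‖ ^ 2 / (2 * σ ^ 2))) *
          ∫ u : E, Real.exp (-(2 * b) * ‖u‖ ^ 2) := by
      intro x _
      rw [integral_finset_sum _ (fun y _ => hterm _ _)]
      exact Finset.sum_congr rfl fun y _ => by rw [integral_const_mul, htrans]
    rw [Finset.sum_congr rfl this]
    simp_rw [← Finset.sum_mul]
    rw [h, zero_mul]
  have hF0 : ∀ w : E, F w = 0 := by
    have hae := (integral_eq_zero_iff_of_nonneg (fun w => sq_nonneg (F w)) hGint).1 hzero
    have hcont : Continuous F := by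
      apply continuous_finset_sum
      intro x _
      fun_prop
    have heq : (fun w : E => F w ^ 2) = fun _ => (0 : ℝ) :=
      (Continuous.ae_eq_iff_eq volume (hcont.pow 2) continuous_const).1 hae
    intro w
    exact pow_eq_zero_iff (two_ne_zero) |>.1 (congrFun heq w)
  obtain ⟨v, hv⟩ := aux_generic S
  set e : Fin S.card ≃ {x // x ∈ S} := S.equivFin.symm with hedef
  set r : Fin S.card → ℝ := fun i => Real.exp (2 * b * ⟪(e i : E), v⟫) with hrdef
  set u : Fin S.card → ℝ := fun i => c (e i) * Real.exp (-b * ‖(e i : E)‖ ^ 2) with hudef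
  have hrinj : Function.Injective r := by
    intro i j hij
    have h1 : 2 * b * ⟪(e i : E), v⟫ = 2 * b * ⟪(e j : E), v⟫ := Real.exp_injective hij
    have h2 : ⟪(e i : E), v⟫ = ⟪(e j : E), v⟫ :=
      mul_left_cancel₀ (by positivity) h1
    have h3 : (e i : E) = (e j : E) := by
      by_contra hne
      exact hv _ (e i).2 _ (e j).2 hne h2
    exact e.injective (Subtype.ext h3)
  have hpow : ∀ n : Fin S.card, ∑ i, u i * r i ^ (n : ℕ) = 0 := by
    intro n
    have hFn := hF0 (((n : ℕ) : ℝ) • v)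
    rw [hFdef] at hFn
    simp only at hFn
    have hterm2 : ∀ x ∈ S, c x * Real.exp (-b * ‖x - ((n : ℕ) : ℝ) • v‖ ^ 2)
        = ((c x * Real.exp (-b * ‖x‖ ^ 2)) * Real.exp (2 * b * ⟪x, v⟫) ^ (n : ℕ))
          * Real.exp (-b * ((n : ℕ) : ℝ) ^ 2 * ‖v‖ ^ 2) := by
      intro x _
      rw [← Real.exp_nat_mul, mul_assoc, mul_assoc, ← Real.exp_add, ← Real.exp_add]
      congr 1
      rw [norm_sub_sq_real, real_inner_smul_right, norm_smul]
      simp only [Real.norm_natCast]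
      ring
    rw [Finset.sum_congr rfl hterm2, ← Finset.sum_mul] at hFn
    have hsum0 : ∑ x ∈ S, (c x * Real.exp (-b * ‖x‖ ^ 2)) * Real.exp (2 * b * ⟪x, v⟫) ^ (n : ℕ) = 0 :=
      by
      rcases mul_eq_zero.1 hFn with h' | h'
      · exact h'
      · exact absurd h' (Real.exp_ne_zero _)
    calc ∑ i, u i * r i ^ (n : ℕ)
        = ∑ x : {x // x ∈ S}, (c (x : E) * Real.exp (-b * ‖(x : E)‖ ^ 2))
            * Real.exp (2 * b * ⟪(x : E), v⟫) ^ (n : ℕ) := Equiv.sum_comp e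
            (fun x : {x // x ∈ S} => (c (x : E) * Real.exp (-b * ‖(x : E)‖ ^ 2))
              * Real.exp (2 * b * ⟪(x : E), v⟫) ^ (n : ℕ))
      _ = ∑ x ∈ S, (c x * Real.exp (-b * ‖x‖ ^ 2)) * Real.exp (2 * b * ⟪x, v⟫) ^ (n : ℕ) :=
          Finset.sum_coe_sort S
            (fun x => (c x * Real.exp (-b * ‖x‖ ^ 2)) * Real.exp (2 * b * ⟪x, v⟫) ^ (n : ℕ))
      _ = 0 := hsum0
  have hu0 : u = 0 := Matrix.eq_zero_of_forall_pow_sum_mul_pow_eq_zero hrinj hpow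
  intro x hx
  have := congrFun hu0 (e.symm ⟨x, hx⟩)
  simp only [hudef, Pi.zero_apply, Equiv.apply_symm_apply] at this
  rcases mul_eq_zero.1 this with h' | h'
  · exact h'
  · exact absurd h' (Real.exp_ne_zero _)


lemma kerExp_subset {X : Type*} [DecidableEq X] (k : X → X → ℝ) (α β : X →₀ ℝ) (T : Finset X)
    (hα : α.support ⊆ T) (hβ : β.support ⊆ T) :
    kerExp k α β = ∑ x ∈ T, ∑ y ∈ T, α x * β y * k x y := by
  unfold kerExp
  rw [Finset.sum_subset hα]
  · refine Finset.sum_congr rfl fun x _ => ?_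
    refine Finset.sum_subset hβ fun y _ hyn => ?_
    rw [Finsupp.notMem_support_iff.1 hyn]
    ring
  · intro x _ hxn
    have := Finsupp.notMem_support_iff.1 hxn
    simp [this]

end Aux

/-- For the RBF kernel, MMD²(μ,ν) = 0 iff μ = ν. -/
theorem rbf_mmd_sq_eq_zero_iff (d : ℕ) (σ : ℝ) (hσ : 0 < σ)
    (μ ν : EuclideanSpace ℝ (Fin d) →₀ ℝ) (hμ : IsFinPmf μ) (hν : IsFinPmf ν) :
    mmdSq (fun x y => Real.exp (-‖x - y‖ ^ 2 / (2 * σ ^ 2))) μ ν = 0 ↔ μ = ν := by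
  classical
  set k : EuclideanSpace ℝ (Fin d) → EuclideanSpace ℝ (Fin d) → ℝ :=
    fun x y => Real.exp (-‖x - y‖ ^ 2 / (2 * σ ^ 2)) with hk
  set T : Finset (EuclideanSpace ℝ (Fin d)) := μ.support ∪ ν.support with hT
  have hμT : μ.support ⊆ T := Finset.subset_union_left
  have hνT : ν.support ⊆ T := Finset.subset_union_right
  have hsym : ∑ x ∈ T, ∑ y ∈ T, ν x * μ y * k x y = ∑ x ∈ T, ∑ y ∈ T, μ x * ν y * k x y := by
    rw [Finset.sum_comm]
    refine Finset.sum_congr rfl fun x _ => Finset.sum_congr rfl fun y _ => ?_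
    have hkk : k y x = k x y := by simp only [hk, norm_sub_rev]
    rw [hkk]
    ring
  have hquad : mmdSq k μ ν = ∑ x ∈ T, ∑ y ∈ T, (μ x - ν x) * (μ y - ν y) * k x y := by
    rw [mmdSq, kerExp_subset k μ μ T hμT hμT, kerExp_subset k μ ν T hμT hνT,
        kerExp_subset k ν ν T hνT hνT]
    have expand : ∀ x ∈ T, ∑ y ∈ T, (μ x - ν x) * (μ y - ν y) * k x y
        = ∑ y ∈ T, (μ x * μ y * k x y - μ x * ν y * k x y
            - ν x * μ y * k x y + ν x * ν y * k x y) :=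
      fun x _ => Finset.sum_congr rfl fun y _ => by ring
    rw [Finset.sum_congr rfl expand]
    simp only [Finset.sum_add_distrib, Finset.sum_sub_distrib]
    rw [hsym]
    ring
  constructor
  · intro h0
    have hz : ∑ x ∈ T, ∑ y ∈ T, (fun z : EuclideanSpace ℝ (Fin d) => μ z - ν z) x * (fun z : EuclideanSpace ℝ (Fin d) => μ z - ν z) y
        * Real.exp (-‖x - y‖ ^ 2 / (2 * σ ^ 2)) = 0 := by
      rw [← hquad]
      exact h0
    have hc := gaussian_pd hσ T (fun z : EuclideanSpace ℝ (Fin d) => μ z - ν z) hz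
    ext x
    by_cases hx : x ∈ T
    · have := hc x hx
      linarith
    · have hxμ : μ x = 0 := Finsupp.notMem_support_iff.1 fun hc' => hx (hμT hc')
      have hxν : ν x = 0 := Finsupp.notMem_support_iff.1 fun hc' => hx (hνT hc')
      rw [hxμ, hxν]
  · intro h
    subst h
    rw [mmdSq]
    ring
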